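/- arXiv:1212.0456 — 10 statements merged into one kernel-verified Lean document; each statement's English description precedes it below -/
import Mathlib

section
/- If A is a nonempty finite subset of an abelian group G, then A is a coset of a subgroup of G if and only if E(A) = |A|^3, where E(A) is the additive energy of A. -/
open Pointwise

/-- The additive energy: number of triples `(x,y,z) ∈ A³` with `x + y - z ∈ A`. -/
def energyE {G : Type*} [AddCommGroup G] [DecidableEq G] (A : Finset G) : ℕ :=
  ((A ×ˢ A ×ˢ A).filter fun t => t.1 + t.2.1 - t.2.2 ∈ A).card

/-!
Since `energyE A` counts the triples of `A³` with `x + y - z ∈ A`, the equality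
`energyE A = |A|³` says exactly that `A` is closed under `(x, y, z) ↦ x + y - z`.
A nonempty set with this closure property is the translate `a + H` of the subgroup `H = A - a`,
for any `a ∈ A`; conversely every coset is so closed.
-/

section CosetEnergy

variable {G : Type*} [AddCommGroup G]

theorem energyE_eq_card_pow_three_iff [DecidableEq G] (A : Finset G) :
    energyE A = A.card ^ 3 ↔ ∀ x ∈ A, ∀ y ∈ A, ∀ z ∈ A, x + y - z ∈ A := by
  have hcube : (A ×ˢ A ×ˢ A).card = A.card ^ 3 := by
    rw [Finset.card_product, Finset.card_product]; ring
  rw [energyE, ← hcube, Finset.card_filter_eq_iff]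
  simp only [Finset.mem_product, and_imp, Prod.forall]
  exact ⟨fun h x hx y hy z hz => h x y z hx hy hz, fun h x y z hx hy hz => h x hx y hy z hz⟩

theorem add_sub_mem_of_eq_image_add {s : Set G} {g : G} {H : AddSubgroup G}
    (hs : s = (g + ·) '' (H : Set G)) {x y z : G} (hx : x ∈ s) (hy : y ∈ s) (hz : z ∈ s) :
    x + y - z ∈ s := by
  subst hs
  obtain ⟨a, ha, rfl⟩ := hx
  obtain ⟨b, hb, rfl⟩ := hy
  obtain ⟨c, hc, rfl⟩ := hz
  refine ⟨a + b - c, H.sub_mem (H.add_mem ha hb) hc, ?_⟩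
  show g + (a + b - c) = g + a + (g + b) - (g + c)
  abel

def AddSubgroup.ofAddSubClosed {s : Set G} {a : G} (ha : a ∈ s)
    (hs : ∀ x ∈ s, ∀ y ∈ s, ∀ z ∈ s, x + y - z ∈ s) : AddSubgroup G where
  carrier := {h | a + h ∈ s}
  zero_mem' := by simpa using ha
  add_mem' {x y} hx hy := by
    simpa only [Set.mem_ofPred_eq, show a + x + (a + y) - a = a + (x + y) by abel]
      using hs _ hx _ hy a ha
  neg_mem' {x} hx := by
    simpa only [Set.mem_ofPred_eq, show a + a - (a + x) = a + -x by abel]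
      using hs a ha a ha _ hx

theorem eq_image_add_ofAddSubClosed {s : Set G} {a : G} (ha : a ∈ s)
    (hs : ∀ x ∈ s, ∀ y ∈ s, ∀ z ∈ s, x + y - z ∈ s) :
    s = (a + ·) '' (AddSubgroup.ofAddSubClosed ha hs : Set G) := by
  ext b
  refine ⟨fun hb => ⟨b - a, ?_, add_sub_cancel a b⟩, ?_⟩
  · show a + (b - a) ∈ s
    rwa [add_sub_cancel]
  · rintro ⟨h, hh, rfl⟩
    exact hh

end CosetEnergy

theorem coset_iff_energy_eq_cube {G : Type*} [AddCommGroup G] [DecidableEq G]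
    (A : Finset G) (hA : A.Nonempty) :
    (∃ (g : G) (H : AddSubgroup G), (A : Set G) = (g + ·) '' (H : Set G)) ↔
      energyE A = A.card ^ 3 := by
  rw [energyE_eq_card_pow_three_iff]
  constructor
  · rintro ⟨g, H, hAH⟩ x hx y hy z hz
    exact add_sub_mem_of_eq_image_add hAH (Finset.mem_coe.2 hx) (Finset.mem_coe.2 hy)
      (Finset.mem_coe.2 hz)
  · intro hclosed
    obtain ⟨a, ha⟩ := hA
    exact ⟨a, _, eq_image_add_ofAddSubClosed (s := (A : Set G)) ha hclosed⟩
end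

section
/- Let H be a finite coset in an abelian group G, and let A be a finite subset of G with |A ∩ H| ≥ (1-ε)|A| and |A ∩ H| ≥ (1-η)|H|, where ε, η ∈ [0,1). Then E(A) ≥ (1 - 4(ε + η))|A|^3. -/
open Pointwise

/-!
Write `B = A ∩ H`. For `x, y ∈ B` the sets `B` and `x + y - B` both lie in the coset `H`, so they
meet in at least `2|B| - |H|` points; summing over `x, y` gives `E(A) ≥ E(B) ≥ |B|²(2|B| - |H|)`.
Since `|B| ≥ (1 - ε)|A|` and `|H| ≤ |B| / (1 - η)`, this is at least
`(1 - ε)³(1 - 2η)/(1 - η) |A|³ ≥ (1 - 4(ε + η))|A|³`.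
-/

open Finset

section Energy

variable {G : Type*} [AddCommGroup G]

lemma add_sub_mem_image_add_left {g : G} {H₀ : AddSubgroup G} {x y z : G}
    (hx : x ∈ (g + ·) '' (H₀ : Set G)) (hy : y ∈ (g + ·) '' (H₀ : Set G))
    (hz : z ∈ (g + ·) '' (H₀ : Set G)) : x + y - z ∈ (g + ·) '' (H₀ : Set G) := by
  obtain ⟨a, ha, rfl⟩ := hx
  obtain ⟨b, hb, rfl⟩ := hy
  obtain ⟨c, hc, rfl⟩ := hz
  exact ⟨a + b - c, sub_mem (add_mem ha hb) hc, by dsimp only; abel⟩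

variable [DecidableEq G]

lemma two_mul_card_le_card_add_card_filter_sub_mem {B S : Finset G} (c : G) (hBS : B ⊆ S)
    (hc : ∀ z ∈ B, c - z ∈ S) : 2 * #B ≤ #S + #{z ∈ B | c - z ∈ B} := by
  set C := B.image (c - ·)
  have hC : #C = #B := card_image_of_injective _ sub_right_injective
  have hCS : C ⊆ S := image_subset_iff.2 hc
  have hBC : B ∩ C ⊆ {z ∈ B | c - z ∈ B} := by
    intro z hz
    obtain ⟨hzB, w, hw, rfl⟩ := by simpa only [C, mem_inter, mem_image] using hz
    simpa [hzB] using hw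
  calc 2 * #B = #(B ∪ C) + #(B ∩ C) := by rw [card_union_add_card_inter, hC]; ring
    _ ≤ #S + #{z ∈ B | c - z ∈ B} :=
      add_le_add (card_le_card (union_subset hBS hCS)) (card_le_card hBC)

lemma energyE_mono {A B : Finset G} (hBA : B ⊆ A) : energyE B ≤ energyE A := by
  refine card_le_card fun t ht => ?_
  simp only [mem_filter, mem_product] at ht ⊢
  exact ⟨⟨hBA ht.1.1, hBA ht.1.2.1, hBA ht.1.2.2⟩, hBA ht.2⟩

lemma energyE_eq_sum (A : Finset G) :
    energyE A = ∑ x ∈ A, ∑ y ∈ A, #{z ∈ A | x + y - z ∈ A} := by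
  simp only [energyE, card_filter, sum_product]

lemma two_mul_card_pow_three_le_energyE {B S : Finset G} (hBS : B ⊆ S)
    (hS : ∀ x ∈ S, ∀ y ∈ S, ∀ z ∈ S, x + y - z ∈ S) :
    2 * #B ^ 3 ≤ #B ^ 2 * #S + energyE B := by
  have hfiber : ∀ x ∈ B, ∀ y ∈ B, 2 * #B ≤ #S + #{z ∈ B | x + y - z ∈ B} :=
    fun x hx y hy => two_mul_card_le_card_add_card_filter_sub_mem (x + y) hBS
      fun z hz => hS x (hBS hx) y (hBS hy) z (hBS hz)
  calc 2 * #B ^ 3 = ∑ x ∈ B, ∑ y ∈ B, 2 * #B := by simp only [sum_const, smul_eq_mul]; ring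
    _ ≤ ∑ x ∈ B, ∑ y ∈ B, (#S + #{z ∈ B | x + y - z ∈ B}) :=
      sum_le_sum fun x hx => sum_le_sum fun y hy => hfiber x hx y hy
    _ = #B ^ 2 * #S + energyE B := by
      rw [energyE_eq_sum]
      simp only [sum_add_distrib, sum_const, smul_eq_mul]
      ring

end Energy

lemma one_sub_four_mul_pow_three_le_of_count {a b h E ε η : ℝ} (ha : 0 ≤ a) (hE : 0 ≤ E)
    (hε : 0 ≤ ε) (hη : 0 ≤ η) (hba : (1 - ε) * a ≤ b) (hbh : (1 - η) * h ≤ b)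
    (hcount : 2 * b ^ 3 ≤ b ^ 2 * h + E) : (1 - 4 * (ε + η)) * a ^ 3 ≤ E := by
  rcases le_or_gt (1 - 4 * (ε + η)) 0 with hneg | hpos
  · nlinarith [mul_nonpos_of_nonpos_of_nonneg hneg (pow_nonneg ha 3)]
  have hεa : 0 ≤ (1 - ε) * a := mul_nonneg (by linarith) ha
  have hcube : (1 - 3 * ε) * a ^ 3 ≤ b ^ 3 := by
    calc (1 - 3 * ε) * a ^ 3 ≤ ((1 - ε) * a) ^ 3 := by
          nlinarith [mul_nonneg (mul_nonneg (sq_nonneg ε) (pow_nonneg ha 3)) (by linarith : (0:ℝ) ≤ 3 - ε)]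
      _ ≤ b ^ 3 := pow_le_pow_left₀ hεa hba 3
  have hcoeff : (1 - η) * (1 - 4 * (ε + η)) ≤ (1 - 2 * η) * (1 - 3 * ε) := by
    nlinarith [mul_nonneg hε hη]
  have key : (1 - η) * ((1 - 4 * (ε + η)) * a ^ 3) ≤ (1 - η) * E := by
    calc (1 - η) * ((1 - 4 * (ε + η)) * a ^ 3)
        ≤ (1 - 2 * η) * ((1 - 3 * ε) * a ^ 3) := by
          nlinarith [mul_le_mul_of_nonneg_right hcoeff (pow_nonneg ha 3)]
      _ ≤ (1 - 2 * η) * b ^ 3 := mul_le_mul_of_nonneg_left hcube (by linarith)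
      _ ≤ (1 - η) * E := by nlinarith [mul_le_mul_of_nonneg_left hbh (sq_nonneg b)]
  exact le_of_mul_le_mul_left key (by linarith)

theorem energy_of_near_coset_general {G : Type*} [AddCommGroup G] [DecidableEq G]
    (A H : Finset G) (hH : ∃ (g : G) (H₀ : AddSubgroup G), (H : Set G) = (g + ·) '' (H₀ : Set G))
    (ε η : ℝ) (hε : 0 ≤ ε) (hη : 0 ≤ η)
    (h1 : (1 - ε) * A.card ≤ (A ∩ H).card)
    (h2 : (1 - η) * H.card ≤ (A ∩ H).card) :
    (1 - 4 * (ε + η)) * (A.card : ℝ) ^ 3 ≤ energyE A := by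
  obtain ⟨g, H₀, hHg⟩ := hH
  have hclosed : ∀ x ∈ H, ∀ y ∈ H, ∀ z ∈ H, x + y - z ∈ H := by
    simp only [← mem_coe, hHg]
    exact fun x hx y hy z hz => add_sub_mem_image_add_left hx hy hz
  have hcount : 2 * #(A ∩ H) ^ 3 ≤ #(A ∩ H) ^ 2 * #H + energyE A :=
    (two_mul_card_pow_three_le_energyE inter_subset_right hclosed).trans
      (Nat.add_le_add_left (energyE_mono inter_subset_left) _)
  exact one_sub_four_mul_pow_three_le_of_count (by positivity) (by positivity) hε hη h1 h2
    (mod_cast hcount)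

theorem energy_of_near_coset {G : Type*} [AddCommGroup G] [DecidableEq G]
    (A H : Finset G) (hH : ∃ (g : G) (H₀ : AddSubgroup G), (H : Set G) = (g + ·) '' (H₀ : Set G))
    (ε η : ℝ) (hε : 0 ≤ ε) (hε' : ε < 1) (hη : 0 ≤ η) (hη' : η < 1)
    (h1 : (1 - ε) * A.card ≤ (A ∩ H).card)
    (h2 : (1 - η) * H.card ≤ (A ∩ H).card) :
    (1 - 4 * (ε + η)) * (A.card : ℝ) ^ 3 ≤ energyE A :=
  energy_of_near_coset_general A H hH ε η hε hη h1 h2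
end

section
/- If A is a finite subset of an abelian group with E(A) ≥ (1-δ)|A|^3 for δ ≤ 1/100, then there is a coset H of a subgroup such that |A ∩ H| ≥ (1 - C δ^{1/2})|A| and |A ∩ H| ≥ (1 - C δ^{1/2})|H|, for some absolute constant C. -/
/-!
Write `r(d) = |A ∩ (A + d)|`. Then `E(A) = ∑_{x,z ∈ A} r(z - x)` and
`r(u) + r(v) ≤ r(u - v) + |A|`. With `s = √δ`, large energy leaves at most `s|A|²` pairs
`(a, b)` with `r(b - a) < (1 - s)|A|`, so discarding the at most `(5/2)s|A|` elements of `A`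
with many such bad partners leaves `A'` in which any two elements share a good partner; hence
`r ≥ (1 - 2s)|A|` on `A' - A'`. Applying the triangle inequality once more, every difference of
two elements of `A' - A'` has `r ≥ (1 - 4s)|A|`, and since at most `2|A \ A'|` of these
representations leave `A'`, it lies in `A' - A'`: so `A' - A'` is a subgroup, of size at most
`|A| / (1 - 2s)` because `∑_d r(d) ≤ |A|²`.
-/

open Pointwise

open Finset

lemma card_filter_lt_le_of_sum_le {ι : Type*} (S : Finset ι) (f : ι → ℝ) {t M : ℝ}
    (hf : ∀ i ∈ S, 0 ≤ f i) (ht : 0 ≤ t) (hM : 0 ≤ M) (hsum : ∑ i ∈ S, f i ≤ t * M) :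
    (#{i ∈ S | t < f i} : ℝ) ≤ M := by
  have hmarkov : t * #{i ∈ S | t < f i} ≤ t * M := calc
    t * #{i ∈ S | t < f i} ≤ ∑ i ∈ S with t < f i, f i := by
      rw [mul_comm, ← nsmul_eq_mul]
      exact card_nsmul_le_sum _ _ _ fun i hi => (mem_filter.1 hi).2.le
    _ ≤ ∑ i ∈ S, f i := sum_le_sum_of_subset_of_nonneg (filter_subset _ _) fun i hi _ => hf i hi
    _ ≤ t * M := hsum
  rcases ht.lt_or_eq with ht | rfl
  · exact le_of_mul_le_mul_left hmarkov ht
  · suffices {i ∈ S | 0 < f i} = ∅ by simpa [this] using hM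
    refine filter_eq_empty_iff.2 fun i hi hpos => ?_
    have := single_le_sum hf hi
    linarith

section

variable {G : Type*} [AddCommGroup G] [DecidableEq G]

def diffRep (A : Finset G) (d : G) : ℕ := #{x ∈ A | x - d ∈ A}

lemma diffRep_le_card (A : Finset G) (d : G) : diffRep A d ≤ #A := card_filter_le _ _

lemma diffRep_add_diffRep_le (A : Finset G) (u v : G) :
    diffRep A u + diffRep A v ≤ diffRep A (u - v) + #A := by
  set Su := {x ∈ A | x - u ∈ A}
  set Sv := {x ∈ A | x - v ∈ A}
  have hinter : #(Su ∩ Sv) ≤ diffRep A (u - v) := by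
    refine card_le_card_of_injOn (· - v) (fun x hx => ?_) sub_left_injective.injOn
    simp only [Su, Sv, coe_inter, coe_filter, Set.mem_inter_iff, Set.mem_ofPred_eq] at hx
    simp only [coe_filter, Set.mem_ofPred_eq, sub_sub_sub_cancel_right]
    exact ⟨hx.2.2, hx.1.2⟩
  have hunion : #(Su ∪ Sv) ≤ #A :=
    card_le_card (union_subset (filter_subset _ _) (filter_subset _ _))
  have := card_union_add_card_inter Su Sv
  change #Su + #Sv ≤ diffRep A (u - v) + #A
  omega

lemma energyE_eq_sum_diffRep (A : Finset G) :
    energyE A = ∑ x ∈ A, ∑ z ∈ A, diffRep A (z - x) := by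
  rw [energyE, card_filter, sum_product]
  refine sum_congr rfl fun x _ => ?_
  rw [sum_product, sum_comm]
  refine sum_congr rfl fun z _ => ?_
  rw [diffRep, card_filter]
  refine sum_congr rfl fun y _ => ?_
  rw [show x + y - z = y - (z - x) by abel]

lemma card_mul_le_of_le_diffRep (A D : Finset G) {m : ℝ} (hm : ∀ d ∈ D, m ≤ diffRep A d) :
    #D * m ≤ #A * #A := by
  have hcount : ∀ x ∈ A, (#{d ∈ D | x - d ∈ A} : ℝ) ≤ #A := fun x _ => by
    exact_mod_cast
      card_le_card_of_injOn (x - ·) (fun d hd => by simp_all) sub_right_injective.injOn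
  simpa only [nsmul_eq_mul] using
    card_nsmul_le_card_nsmul (R := ℝ) (fun d x => x - d ∈ A) (s := D) (t := A) hm hcount

lemma diffRep_le_card_filter_add (A A' : Finset G) (d : G) :
    diffRep A d ≤ #{x ∈ A' | x - d ∈ A'} + 2 * #(A \ A') := by
  have hcover : {x ∈ A | x - d ∈ A} ⊆
      {x ∈ A' | x - d ∈ A'} ∪ ((A \ A') ∪ (A \ A').image (· + d)) := by
    intro x hx
    simp only [mem_filter] at hx
    by_cases hx' : x ∈ A'
    · by_cases hxd : x - d ∈ A'
      · simp [hx', hxd]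
      · exact mem_union_right _ (mem_union_right _ (mem_image.2 ⟨x - d, by simp [hx.2, hxd]⟩))
    · simp [hx.1, hx']
  calc diffRep A d ≤ #({x ∈ A' | x - d ∈ A'} ∪ ((A \ A') ∪ (A \ A').image (· + d))) :=
        card_le_card hcover
    _ ≤ #{x ∈ A' | x - d ∈ A'} + (#(A \ A') + #((A \ A').image (· + d))) :=
        (card_union_le _ _).trans (Nat.add_le_add_left (card_union_le _ _) _)
    _ ≤ #{x ∈ A' | x - d ∈ A'} + 2 * #(A \ A') := by
        have := card_image_le (s := A \ A') (f := (· + d))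
        omega

lemma sub_mem_sub_of_popular {A A' : Finset G} {τ : ℝ}
    (hpop : ∀ a ∈ A', ∀ b ∈ A', τ ≤ diffRep A (a - b)) (hτ : #A + 2 * #(A \ A') < 2 * τ)
    {x y : G} (hx : x ∈ A' - A') (hy : y ∈ A' - A') : x - y ∈ A' - A' := by
  obtain ⟨a, ha, b, hb, rfl⟩ := mem_sub.1 hx
  obtain ⟨c, hc, e, he, rfl⟩ := mem_sub.1 hy
  generalize hd : a - b - (c - e) = d
  have htri : (diffRep A (a - c) + diffRep A (b - e) : ℝ) ≤ diffRep A d + #A := by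
    rw [← hd, show a - b - (c - e) = a - c - (b - e) by abel]
    exact_mod_cast diffRep_add_diffRep_le A (a - c) (b - e)
  have hcover : (diffRep A d : ℝ) ≤ #{z ∈ A' | z - d ∈ A'} + 2 * #(A \ A') := by
    exact_mod_cast diffRep_le_card_filter_add A A' d
  obtain ⟨z, hz⟩ : ({z ∈ A' | z - d ∈ A'} : Finset G).Nonempty := by
    rw [← card_pos, ← Nat.cast_pos (α := ℝ)]
    linarith [hpop a ha c hc, hpop b hb e he]
  rw [mem_filter] at hz
  simpa using sub_mem_sub hz.1 hz.2

lemma exists_coset_of_popular {A A' : Finset G} {τ : ℝ} (hne : A'.Nonempty)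
    (hpop : ∀ a ∈ A', ∀ b ∈ A', τ ≤ diffRep A (a - b)) (hτ : #A + 2 * #(A \ A') < 2 * τ) :
    ∃ H : Finset G, (∃ (g : G) (H₀ : AddSubgroup G), (H : Set G) = (g + ·) '' (H₀ : Set G)) ∧
      A' ⊆ H ∧ #H * τ ≤ #A * #A := by
  obtain ⟨g, hg⟩ := hne
  let H₀ := AddSubgroup.ofSub ((A' - A' : Finset G) : Set G) ⟨0, by simpa using sub_mem_sub hg hg⟩
    fun x hx y hy => sub_eq_add_neg x y ▸ sub_mem_sub_of_popular hpop hτ hx hy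
  refine ⟨(A' - A').image (g + ·), ⟨g, H₀, coe_image⟩, fun a ha => ?_, ?_⟩
  · exact mem_image.2 ⟨a - g, sub_mem_sub ha hg, by abel⟩
  · rw [card_image_of_injective _ (add_right_injective g)]
    refine card_mul_le_of_le_diffRep A _ fun d hd => ?_
    obtain ⟨a, ha, b, hb, rfl⟩ := mem_sub.1 hd
    exact hpop a ha b hb

lemma sum_sum_card_sub_diffRep (A : Finset G) :
    ∑ x ∈ A, ∑ z ∈ A, ((#A : ℝ) - diffRep A (z - x)) = #A ^ 3 - energyE A := by
  simp only [sum_sub_distrib, sum_const, nsmul_eq_mul, energyE_eq_sum_diffRep, Nat.cast_sum]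
  ring

noncomputable def badPartners (A : Finset G) (s : ℝ) (a : G) : Finset G :=
  {b ∈ A | s * #A < #A - (diffRep A (b - a) : ℝ)}

lemma sum_card_badPartners_le (A : Finset G) {s : ℝ} (hs : 0 ≤ s)
    (hdef : ∑ x ∈ A, ∑ z ∈ A, ((#A : ℝ) - diffRep A (z - x)) ≤ s ^ 2 * #A ^ 3) :
    ∑ a ∈ A, (#(badPartners A s a) : ℝ) ≤ s * #A ^ 2 := by
  have hmarkov := card_filter_lt_le_of_sum_le (A ×ˢ A)
    (fun p => #A - (diffRep A (p.2 - p.1) : ℝ)) (t := s * #A) (M := s * #A ^ 2)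
    (fun p _ => sub_nonneg.2 (by exact_mod_cast diffRep_le_card A _)) (by positivity)
    (by positivity) (by rw [sum_product]; linarith)
  rw [card_filter, sum_product] at hmarkov
  simpa only [badPartners, card_filter, Nat.cast_sum] using hmarkov

lemma le_diffRep_sub_of_card_badPartners_lt (A : Finset G) (s : ℝ) {a b : G}
    (hab : #(badPartners A s a) + #(badPartners A s b) < #A) :
    (1 - 2 * s) * #A ≤ diffRep A (a - b) := by
  obtain ⟨c, hcA, hc⟩ := exists_mem_notMem_of_card_lt_card
    ((card_union_le (badPartners A s a) (badPartners A s b)).trans_lt hab)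
  simp only [badPartners, mem_union, mem_filter, hcA, true_and, not_or, not_lt] at hc
  have htri : (diffRep A (c - b) + diffRep A (c - a) : ℝ) ≤ diffRep A (a - b) + #A := by
    exact_mod_cast sub_sub_sub_cancel_left b a c ▸ diffRep_add_diffRep_le A (c - b) (c - a)
  linarith

lemma exists_popular_subset (A : Finset G) {s : ℝ} (hs : 0 ≤ s)
    (hdef : ∑ x ∈ A, ∑ z ∈ A, ((#A : ℝ) - diffRep A (z - x)) ≤ s ^ 2 * #A ^ 3) :
    ∃ A' ⊆ A, (#(A \ A') : ℝ) ≤ 5 / 2 * s * #A ∧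
      ∀ a ∈ A', ∀ b ∈ A', (1 - 2 * s) * #A ≤ diffRep A (a - b) := by
  let A' : Finset G := {a ∈ A | (#(badPartners A s a) : ℝ) ≤ 2 / 5 * #A}
  refine ⟨A', filter_subset _ _, ?_, fun a ha b hb => ?_⟩
  · have hsdiff : A \ A' = {a ∈ A | 2 / 5 * #A < (#(badPartners A s a) : ℝ)} := by
      ext
      simp only [A', mem_sdiff, mem_filter, not_and, not_le]
      tauto
    rw [hsdiff]
    refine card_filter_lt_le_of_sum_le A _ (fun _ _ => by positivity) (by positivity)
      (by positivity) ?_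
    linarith [sum_card_badPartners_le A hs hdef]
  · refine le_diffRep_sub_of_card_badPartners_lt A s ?_
    have hpos : (0 : ℝ) < #A := by exact_mod_cast card_pos.2 ⟨a, filter_subset _ A ha⟩
    have hfew_a := (mem_filter.1 ha).2
    have hfew_b := (mem_filter.1 hb).2
    exact_mod_cast (show (#(badPartners A s a) + #(badPartners A s b) : ℝ) < #A by linarith)

end

theorem near_coset_of_large_energy :
    ∃ C : ℝ, 0 < C ∧
      ∀ (G : Type) (_ : AddCommGroup G) (_ : DecidableEq G) (A : Finset G),
        A.Nonempty → ∀ δ : ℝ, 0 ≤ δ → δ ≤ 1 / 100 →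
        (1 - δ) * (A.card : ℝ) ^ 3 ≤ energyE A →
        ∃ (H : Finset G), (∃ (g : G) (H₀ : AddSubgroup G), (H : Set G) = (g + ·) '' (H₀ : Set G)) ∧
          (1 - C * δ ^ ((1 : ℝ) / 2)) * A.card ≤ ((A ∩ H).card : ℝ) ∧
          (1 - C * δ ^ ((1 : ℝ) / 2)) * H.card ≤ ((A ∩ H).card : ℝ) := by
  refine ⟨10, by norm_num, fun G _ _ A hA δ hδ0 hδ1 hE => ?_⟩
  set s := δ ^ ((1 : ℝ) / 2)
  have hs0 : 0 ≤ s := by positivity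
  have hsq : s ^ 2 = δ := by rw [← Real.rpow_natCast, ← Real.rpow_mul hδ0]; norm_num
  have hs : s ≤ 1 / 10 := by nlinarith
  have hN : (0 : ℝ) < #A := by exact_mod_cast hA.card_pos
  obtain ⟨A', hA'A, hsmall, hpop⟩ :=
    exists_popular_subset A hs0 (by rw [sum_sum_card_sub_diffRep, hsq]; linarith)
  have hA' : (1 - 5 / 2 * s) * #A ≤ #A' := by
    have : (#(A \ A') + #A' : ℝ) = #A := by exact_mod_cast card_sdiff_add_card_eq_card hA'A
    linarith
  obtain ⟨H, hcoset, hA'H, hH⟩ := exists_coset_of_popular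
    (card_pos.1 (by exact_mod_cast (show (0 : ℝ) < #A' by nlinarith))) hpop (by nlinarith)
  have hcap : (#A' : ℝ) ≤ #(A ∩ H) := by exact_mod_cast card_le_card (subset_inter hA'A hA'H)
  refine ⟨H, hcoset, by nlinarith, ?_⟩
  have hHle : (1 - 2 * s) * #H ≤ #A := le_of_mul_le_mul_right (by linarith) hN
  nlinarith [mul_le_mul_of_nonneg_left hHle (by linarith : (0 : ℝ) ≤ 1 - 5 / 2 * s)]
end

section
/- Let Q be a symmetric convex body about the origin in R^d and φ: Z^d → G a group homomorphism to an abelian group G, and let M = φ(Q ∩ Z^d) be finite. Then |M + M| ≤ 5^d |M|. -/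
/-!
Let `A = Q ∩ ℤ^d`. If `x, y ∈ A + A` are congruent modulo `4`, then `(x - y) / 4` is an integer
point which is the average of two points of `Q` and two points of `-Q = Q`, hence lies in `A`.
So `A + A` is covered by `4^d` translates of `4 • A`, one for each residue class modulo `4`,
and applying `φ` gives `|M + M| ≤ 4^d |M|`.
-/

open Pointwise Function

theorem Convex.inv_four_smul_add_sub_add_mem {E : Type*} [AddCommGroup E] [Module ℝ E]
    {Q : Set E} (hconv : Convex ℝ Q) (hsymm : Q = -Q) {a b c e : E}
    (ha : a ∈ Q) (hb : b ∈ Q) (hc : c ∈ Q) (he : e ∈ Q) :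
    (4 : ℝ)⁻¹ • (c + e - (a + b)) ∈ Q := by
  have hneg : ∀ x ∈ Q, -x ∈ Q := fun x hx => Set.mem_neg.mp (hsymm ▸ hx)
  have hce := hconv hc he (a := 2⁻¹) (b := 2⁻¹) (by norm_num) (by norm_num) (by norm_num)
  have hab := hconv (hneg a ha) (hneg b hb) (a := 2⁻¹) (b := 2⁻¹) (by norm_num) (by norm_num)
    (by norm_num)
  convert hconv hce hab (a := 2⁻¹) (b := 2⁻¹) (by norm_num) (by norm_num) (by norm_num) using 1
  module

section LatticePoints

variable {ι : Type*}

def latticePoints (Q : Set (ι → ℝ)) : Set (ι → ℤ) := {v | (fun i => (v i : ℝ)) ∈ Q}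

variable {Q : Set (ι → ℝ)}

theorem exists_mem_latticePoints_of_dvd (hconv : Convex ℝ Q) (hsymm : Q = -Q)
    {a b c e : ι → ℤ} (ha : a ∈ latticePoints Q) (hb : b ∈ latticePoints Q)
    (hc : c ∈ latticePoints Q) (he : e ∈ latticePoints Q)
    (hdvd : ∀ i, (4 : ℤ) ∣ (c + e - (a + b)) i) :
    ∃ u ∈ latticePoints Q, c + e = a + b + 4 • u := by
  choose u hu using hdvd
  refine ⟨u, ?_, ?_⟩
  · have hcast : (fun i => (u i : ℝ)) = (4 : ℝ)⁻¹ • ((fun i => (c i : ℝ)) + (fun i => (e i : ℝ))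
        - ((fun i => (a i : ℝ)) + (fun i => (b i : ℝ)))) := by
      funext i
      have hi := congrArg (Int.cast : ℤ → ℝ) (hu i)
      simp only [Pi.add_apply, Pi.sub_apply] at hi
      push_cast at hi
      simp only [Pi.smul_apply, Pi.add_apply, Pi.sub_apply, smul_eq_mul]
      linarith
    simpa only [latticePoints, Set.mem_ofPred_eq, hcast] using
      hconv.inv_four_smul_add_sub_add_mem hsymm ha hb hc he
  · funext i
    have hi := hu i
    simp only [Pi.add_apply, Pi.sub_apply] at hi
    rw [Pi.add_apply, Pi.add_apply, Pi.add_apply, Pi.smul_apply, nsmul_eq_mul]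
    omega

theorem exists_latticePoints_add_subset_range_add_four_smul (hconv : Convex ℝ Q)
    (hsymm : Q = -Q) : ∃ t : (ι → ZMod 4) → (ι → ℤ),
      latticePoints Q + latticePoints Q ⊆ Set.range t + (fun u => 4 • u) '' latticePoints Q := by
  set A := latticePoints Q
  set residue : (ι → ℤ) → ι → ZMod 4 := fun v i => (v i : ZMod 4)
  refine ⟨invFunOn residue (A + A), ?_⟩
  rintro x hx
  have hclass : ∃ y ∈ A + A, residue y = residue x := ⟨x, hx, rfl⟩
  obtain ⟨a, ha, b, hb, hab⟩ := invFunOn_mem hclass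
  obtain ⟨c, hc, e, he, hce⟩ := hx
  have hdvd : ∀ i, (4 : ℤ) ∣ (c + e - (a + b)) i := fun i => by
    have hi := congrFun (invFunOn_eq hclass) i
    rw [← hab, ← hce] at hi
    exact_mod_cast (ZMod.intCast_eq_intCast_iff_dvd_sub _ _ 4).mp hi
  obtain ⟨u, hu, hceu⟩ := exists_mem_latticePoints_of_dvd hconv hsymm ha hb hc he hdvd
  exact ⟨_, ⟨residue x, rfl⟩, 4 • u, ⟨u, hu, rfl⟩, by rw [← hab, ← hce]; exact hceu.symm⟩

end LatticePoints

theorem Finset.card_le_card_mul_of_subset_range_add {G R : Type*} [Add G]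
    [DecidableEq G] [Fintype R] {s t : Finset G} (c : R → G) (f : G → G)
    (h : (s : Set G) ⊆ Set.range c + f '' t) : s.card ≤ Fintype.card R * t.card := by
  have hsub : s ⊆ univ.image c + t.image f := by
    rwa [← Finset.coe_subset, Finset.coe_add, Finset.coe_image, Finset.coe_image, coe_univ,
      Set.image_univ]
  calc s.card ≤ (univ.image c).card * (t.image f).card := (card_le_card hsub).trans card_add_le
    _ ≤ Fintype.card R * t.card := Nat.mul_le_mul card_image_le card_image_le

theorem convex_progression_doubling_general {G : Type*} [AddCommGroup G] [DecidableEq G]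
    (d : ℕ) (Q : Set (Fin d → ℝ))
    (hconv : Convex ℝ Q) (hsymm : Q = -Q)
    (φ : (Fin d → ℤ) →+ G) (M : Finset G)
    (hM : (M : Set G) = φ '' {v : Fin d → ℤ | (fun i => (v i : ℝ)) ∈ Q}) :
    ((M + M).card : ℝ) ≤ 5 ^ d * M.card := by
  obtain ⟨t, hcover⟩ := exists_latticePoints_add_subset_range_add_four_smul hconv hsymm
  have hM' : (M : Set G) = φ '' latticePoints Q := hM
  have hMM : ((M + M : Finset G) : Set G) ⊆ Set.range (φ ∘ t) + (fun g => 4 • g) '' M := by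
    rw [Finset.coe_add, hM', ← Set.image_add, Set.range_comp,
      ← Set.image_comm (fun u => map_nsmul φ 4 u), ← Set.image_add]
    exact Set.image_mono hcover
  have hcard := Finset.card_le_card_mul_of_subset_range_add _ _ hMM
  rw [Fintype.card_fun, ZMod.card, Fintype.card_fin] at hcard
  calc ((M + M).card : ℝ) ≤ 4 ^ d * M.card := by exact_mod_cast hcard
    _ ≤ 5 ^ d * M.card :=
      mul_le_mul_of_nonneg_right (pow_le_pow_left₀ (by norm_num) (by norm_num) d) M.card.cast_nonneg

theorem convex_progression_doubling {G : Type*} [AddCommGroup G] [DecidableEq G]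
    (d : ℕ) (Q : Set (Fin d → ℝ))
    (hconv : Convex ℝ Q) (hcomp : IsCompact Q) (hsymm : Q = -Q)
    (φ : (Fin d → ℤ) →+ G) (M : Finset G)
    (hM : (M : Set G) = φ '' {v : Fin d → ℤ | (fun i => (v i : ℝ)) ∈ Q}) :
    ((M + M).card : ℝ) ≤ 5 ^ d * M.card :=
  convex_progression_doubling_general d Q hconv hsymm φ M hM
end

section
/- Let M be a finite subset of an abelian group with |M + M| ≤ C|M|, and let A be a finite set with |A ∩ M| ≥ η|A| and |A ∩ M| ≥ ε|M|. Then E(A) ≥ ε η^3 C^{-1} |A|^3. -/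
open Pointwise

/-!
Let `B = A ∩ M`. Cauchy–Schwarz gives `|B|⁴ ≤ |B + B| E(B) ≤ C |M| E(A)`, and `|M| ≤ |B| / ε`,
so `ε |B|³ ≤ C E(A)`. Since `|B| ≥ η |A|`, this is `ε η³ |A|³ ≤ C E(A)`.
-/

open Finset

namespace Finset

variable {G : Type*} [AddCommGroup G] [DecidableEq G]

/-- The triple `(x, y, z)` corresponds to the quadruple with `x + y = z + (x + y - z)`. -/
lemma energyE_eq_addEnergy (A : Finset G) : energyE A = addEnergy A A := by
  unfold energyE addEnergy
  refine card_nbij' (fun t => ((t.1, t.2.2), (t.2.1, t.1 + t.2.1 - t.2.2)))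
    (fun q => (q.1.1, q.2.1, q.1.2)) ?_ ?_ ?_ ?_
  · rintro ⟨x, y, z⟩ ht
    simp only [mem_coe, mem_filter, mem_product] at ht ⊢
    exact ⟨⟨⟨ht.1.1, ht.1.2.2⟩, ht.1.2.1, ht.2⟩, by abel⟩
  · rintro ⟨⟨x, z⟩, y, w⟩ hq
    simp only [mem_coe, mem_filter, mem_product] at hq ⊢
    have hw : x + y - z = w := by rw [hq.2]; abel
    exact ⟨⟨hq.1.1.1, hq.1.2.1, hq.1.1.2⟩, hw ▸ hq.1.2.2⟩
  · rintro ⟨x, y, z⟩ _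
    rfl
  · rintro ⟨⟨x, z⟩, y, w⟩ hq
    simp only [mem_coe, mem_filter] at hq
    simp only [Prod.mk.injEq, true_and]
    rw [hq.2]
    abel

lemma card_pow_four_le_card_add_mul_energyE {A B : Finset G} (hBA : B ⊆ A) :
    #B ^ 4 ≤ #(B + B) * energyE A :=
  calc #B ^ 4 = #B ^ 2 * #B ^ 2 := by ring
    _ ≤ #(B + B) * addEnergy B B := le_card_add_mul_addEnergy B B
    _ ≤ #(B + B) * energyE A := by
      rw [energyE_eq_addEnergy]
      gcongr

lemma mul_card_pow_three_le_mul_energyE {A B M : Finset G} {C ε : ℝ} (hBA : B ⊆ A)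
    (hBM : B ⊆ M) (hC : 0 ≤ C) (hM : (#(M + M) : ℝ) ≤ C * #M) (hε : 0 ≤ ε)
    (hB : ε * #M ≤ #B) : ε * (#B : ℝ) ^ 3 ≤ C * energyE A := by
  have hE : (0 : ℝ) ≤ energyE A := Nat.cast_nonneg _
  obtain hb | hb := (Nat.cast_nonneg (α := ℝ) #B).eq_or_lt
  · rw [← hb, zero_pow three_ne_zero, mul_zero]
    positivity
  have h4 : (#B : ℝ) ^ 4 ≤ C * #M * energyE A :=
    calc (#B : ℝ) ^ 4 ≤ #(B + B) * energyE A := by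
          exact_mod_cast card_pow_four_le_card_add_mul_energyE hBA
      _ ≤ #(M + M) * energyE A := by gcongr
      _ ≤ C * #M * energyE A := by gcongr
  have : ε * (#B : ℝ) ^ 3 * #B ≤ C * energyE A * #B :=
    calc ε * (#B : ℝ) ^ 3 * #B = ε * (#B : ℝ) ^ 4 := by ring
      _ ≤ ε * (C * #M * energyE A) := by gcongr
      _ = C * energyE A * (ε * #M) := by ring
      _ ≤ C * energyE A * #B := by gcongr
  exact le_of_mul_le_mul_right this hb

end Finset

theorem energy_of_intersection_with_small_doubling_general {G : Type*} [AddCommGroup G] [DecidableEq G]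
    (A M : Finset G) (C : ℝ) (hC : 0 < C) (hM : ((M + M).card : ℝ) ≤ C * M.card)
    (η ε : ℝ) (hη : 0 < η) (hε : 0 < ε)
    (h1 : η * A.card ≤ ((A ∩ M).card : ℝ)) (h2 : ε * M.card ≤ ((A ∩ M).card : ℝ)) :
    ε * η ^ 3 * C⁻¹ * (A.card : ℝ) ^ 3 ≤ energyE A := by
  have key := mul_card_pow_three_le_mul_energyE inter_subset_left inter_subset_right
    hC.le hM hε.le h2
  have hηA : (η * A.card) ^ 3 ≤ ((A ∩ M).card : ℝ) ^ 3 := by gcongr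
  rw [mul_comm C, ← div_le_iff₀ hC] at key
  calc ε * η ^ 3 * C⁻¹ * (A.card : ℝ) ^ 3 = ε * (η * A.card) ^ 3 / C := by ring
    _ ≤ ε * ((A ∩ M).card : ℝ) ^ 3 / C := by gcongr
    _ ≤ energyE A := key

theorem energy_of_intersection_with_small_doubling {G : Type*} [AddCommGroup G] [DecidableEq G]
    (A M : Finset G) (C : ℝ) (hC : 0 < C) (hM : ((M + M).card : ℝ) ≤ C * M.card)
    (η ε : ℝ) (hη : 0 < η) (hη' : η ≤ 1) (hε : 0 < ε) (hε' : ε ≤ 1)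
    (h1 : η * A.card ≤ ((A ∩ M).card : ℝ)) (h2 : ε * M.card ≤ ((A ∩ M).card : ℝ)) :
    ε * η ^ 3 * C⁻¹ * (A.card : ℝ) ^ 3 ≤ energyE A :=
  energy_of_intersection_with_small_doubling_general A M C hC hM η ε hη hε h1 h2
end

section
/- Let A be a finite nonempty subset of an abelian group with |A + A| ≤ K|A|. Then |nA| ≤ K^n |A| for all integers n ≥ 1. -/
open Pointwise

theorem Finset.card_nsmul_le_of_card_add_le {G : Type*} [AddCommGroup G] [DecidableEq G]
    {A : Finset G} (hA : A.Nonempty) (B : Finset G) {K : ℝ}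
    (hK : ((A + B).card : ℝ) ≤ K * A.card) (n : ℕ) :
    ((n • B).card : ℝ) ≤ K ^ n * A.card := by
  have hA₀ : (0 : ℝ) < A.card := mod_cast hA.card_pos
  have hratio : ((A + B).card : ℝ) / A.card ≤ K := (div_le_iff₀ hA₀).2 hK
  calc ((n • B).card : ℝ)
      ≤ (((A + B).card : ℝ) / A.card) ^ n * A.card := by
        simpa using NNRat.cast_le (K := ℝ) |>.2 (pluennecke_ruzsa_inequality_nsmul_add hA B n)
    _ ≤ K ^ n * A.card := by gcongr

theorem plunnecke {G : Type*} [AddCommGroup G] [DecidableEq G]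
    (A : Finset G) (hA : A.Nonempty) (K : ℝ) (hK : ((A + A).card : ℝ) ≤ K * A.card) :
    ∀ n : ℕ, 1 ≤ n → ((n • A).card : ℝ) ≤ K ^ n * A.card :=
  fun n _ ↦ Finset.card_nsmul_le_of_card_add_le hA A hK n
end

section
/- Let A, A'' be finite subsets of an abelian group G. Then for every x ∈ G, |(A + A'') ∩ (x + A + A'')| ≥ |A + (A'' ∩ (x + A''))|. -/
open Pointwise

theorem Finset.add_inter_vadd_subset {G : Type*} [AddCommMonoid G] [DecidableEq G]
    (A B : Finset G) (x : G) : A + (B ∩ (x +ᵥ B)) ⊆ (A + B) ∩ (x +ᵥ (A + B)) :=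
  Finset.add_inter_subset.trans_eq <| by rw [add_vadd_comm]

theorem katz_koester {G : Type*} [AddCommGroup G] [DecidableEq G]
    (A A'' : Finset G) (x : G) :
    ((A + (A'' ∩ A''.image (x + ·))).card : ℝ) ≤
      (((A + A'') ∩ (A + A'').image (x + ·)).card : ℝ) := by
  change ((A + (A'' ∩ (x +ᵥ A''))).card : ℝ) ≤ (((A + A'') ∩ (x +ᵥ (A + A''))).card : ℝ)
  exact_mod_cast Finset.card_le_card (Finset.add_inter_vadd_subset A A'' x)
end

section
/- Let A be a finite nonempty subset of an abelian group G with |A+A| ≤ K|A| (K ≥ 1), let f ∈ ℓ^2(G) be finitely supported, and let ε ∈ (0,1]. Then there exists a set X ⊆ G with |X| ≥ (2K)^{-C ε^{-2}} |A| for an absolute constant C, such that ‖τ_x(f * μ_A) - f * μ_A‖_{ℓ^2} ≤ ε ‖f‖_{ℓ^2} for all x ∈ X. -/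
open Pointwise

/-- Convolution of two functions on a (discrete) abelian group. -/
noncomputable def conv {G : Type*} [AddCommGroup G] (f g : G → ℝ) : G → ℝ :=
  fun x => ∑' y, f y * g (x - y)

/-- Translation: `τ_x f (y) = f (y + x)`. -/
def tau {G : Type*} [AddCommGroup G] (x : G) (f : G → ℝ) : G → ℝ :=
  fun y => f (y + x)

/-- Normalised indicator measure `μ_A = 1_A / |A|`. -/
noncomputable def muF {G : Type*} [DecidableEq G] (A : Finset G) : G → ℝ :=
  fun x => if x ∈ A then ((A.card : ℝ))⁻¹ else 0

/-- The `ℓ²(G)` norm (with counting measure). -/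
noncomputable def l2norm {G : Type*} (f : G → ℝ) : ℝ :=
  Real.sqrt (∑' y, (f y) ^ 2)


/-!
Sample `y ∈ A^m` uniformly and compare `f * μ_A` with `f * μ_y = (1/m) ∑ᵢ f(· - yᵢ)`. For each
point `t` the values `f(t - yᵢ) - (f * μ_A)(t)` are independent and centred, so the mean square
of `‖f * μ_y - f * μ_A‖₂` is at most `‖f‖₂² / m`, and at least half of the samples are within
`‖f‖₂ √(2/m)`. Samples `z` and `z + x` in the same translation class give
`τ_x (f * μ_{z + x}) = f * μ_z`, so if both are good then `x` is an `ε`-almost period once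
`m ≍ ε⁻²`. A translation class is determined by the differences `yᵢ - y₀ ∈ A - A`, and
`|A - A| ≤ K² |A|` by Ruzsa's triangle inequality, so some class holds at least
`|A|^m / (2 (K² |A|)^(m-1)) = |A| / (2 K^(2(m-1)))` good samples.
-/

open Finset

section Variance

variable {ι κ R : Type*} [Fintype ι] [DecidableEq ι] [CommSemiring R]

lemma sum_piFinset_mul_apply_of_ne (s : Finset κ) {h : κ → R} (h0 : ∑ a ∈ s, h a = 0)
    {i j : ι} (hij : i ≠ j) :
    ∑ y ∈ Fintype.piFinset fun _ : ι ↦ s, h (y i) * h (y j) = 0 := by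
  -- the sum factors over the coordinates, and the factor at `i` is `∑ a ∈ s, h a = 0`
  have key := prod_univ_sum (fun _ : ι ↦ s)
    (fun k a ↦ if k ∈ ({i, j} : Finset ι) then h a else 1)
  rw [prod_eq_zero (mem_univ i) (by simpa using h0)] at key
  rw [key]
  refine sum_congr rfl fun y _ ↦ ?_
  rw [Fintype.prod_ite_mem, prod_pair hij]

lemma sum_piFinset_sq_sum_apply (s : Finset κ) {h : κ → R} (h0 : ∑ a ∈ s, h a = 0) :
    ∑ y ∈ Fintype.piFinset fun _ : ι ↦ s, (∑ i, h (y i)) ^ 2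
      = Fintype.card ι * #s ^ (Fintype.card ι - 1) * ∑ a ∈ s, h a ^ 2 := by
  simp_rw [sq, Fintype.sum_mul_sum]
  rw [sum_comm]
  simp_rw [sum_comm (s := Fintype.piFinset _) (t := univ)]
  have diagonal (i : ι) : ∑ j, ∑ y ∈ Fintype.piFinset fun _ : ι ↦ s, h (y i) * h (y j)
      = #s ^ (Fintype.card ι - 1) * ∑ a ∈ s, h a * h a := by
    rw [sum_eq_single i (fun j _ hji ↦ sum_piFinset_mul_apply_of_ne s h0 hji.symm)
      (by simp), Fintype.sum_piFinset_apply (fun a ↦ h a * h a), nsmul_eq_mul, Nat.cast_pow]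
  rw [sum_congr rfl fun i _ ↦ diagonal i, sum_const, card_univ, nsmul_eq_mul, mul_assoc]

end Variance

lemma sum_sub_sq_le_sum_sq {κ : Type*} {s : Finset κ} {x : κ → ℝ} {c : ℝ}
    (hc : ∑ a ∈ s, (x a - c) = 0) : ∑ a ∈ s, (x a - c) ^ 2 ≤ ∑ a ∈ s, x a ^ 2 := by
  have expand : ∑ a ∈ s, x a ^ 2
      = ∑ a ∈ s, (x a - c) ^ 2 + 2 * c * ∑ a ∈ s, (x a - c) + #s * c ^ 2 := by
    rw [mul_sum, ← sum_add_distrib]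
    simp only [← nsmul_eq_mul, ← sum_const, ← sum_add_distrib]
    exact sum_congr rfl fun _ _ ↦ by ring
  rw [expand, hc]
  nlinarith [sq_nonneg c, (#s).cast_nonneg (α := ℝ)]

lemma card_le_two_mul_card_filter_le {κ : Type*} {s : Finset κ} {v : κ → ℝ} {M : ℝ}
    (hv : ∀ y ∈ s, 0 ≤ v y) (hsum : ∑ y ∈ s, v y ≤ #s * M) :
    #s ≤ 2 * #{y ∈ s | v y ≤ 2 * M} := by
  rcases le_or_gt M 0 with hM | hM
  · have hall : ∀ y ∈ s, v y ≤ 2 * M := fun y hy ↦ by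
      have hy_le : v y ≤ #s * M := (single_le_sum hv hy).trans hsum
      have hs : (1 : ℝ) ≤ #s := by exact_mod_cast card_pos.2 ⟨y, hy⟩
      nlinarith [hv y hy]
    rw [filter_true_of_mem hall]
    omega
  have hsplit := card_filter_add_card_filter_not (s := s) (fun y ↦ v y ≤ 2 * M)
  set bad := {y ∈ s | ¬ v y ≤ 2 * M}
  have hbad : (2 * #bad : ℝ) * M ≤ #s * M := by
    calc (2 * #bad : ℝ) * M = ∑ _y ∈ bad, 2 * M := by rw [sum_const, nsmul_eq_mul]; ring
      _ ≤ ∑ y ∈ bad, v y := sum_le_sum fun y hy ↦ (not_le.1 (mem_filter.1 hy).2).le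
      _ ≤ ∑ y ∈ s, v y := sum_le_sum_of_subset_of_nonneg (filter_subset _ _) fun y hy _ ↦ hv y hy
      _ ≤ #s * M := hsum
  have : 2 * #bad ≤ #s := by exact_mod_cast le_of_mul_le_mul_right hbad hM
  omega

section L2

variable {α : Type*}

lemma memℓp_two_iff_summable_sq {f : α → ℝ} : Memℓp f 2 ↔ Summable fun x ↦ f x ^ 2 := by
  rw [memℓp_gen_iff (by norm_num)]
  simp [Real.norm_eq_abs, sq_abs]

lemma Memℓp.comp_equiv {β : Type*} {f : α → ℝ} (hf : Memℓp f 2) (e : β ≃ α) :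
    Memℓp (f ∘ e) 2 :=
  memℓp_two_iff_summable_sq.2 <| e.summable_iff.2 (memℓp_two_iff_summable_sq.1 hf)

lemma sq_l2norm (f : α → ℝ) : l2norm f ^ 2 = ∑' x, f x ^ 2 :=
  Real.sq_sqrt (tsum_nonneg fun _ ↦ sq_nonneg _)

lemma l2norm_nonneg (f : α → ℝ) : 0 ≤ l2norm f :=
  Real.sqrt_nonneg _

lemma l2norm_neg (f : α → ℝ) : l2norm (-f) = l2norm f := by
  simp [l2norm]

lemma l2norm_eq_norm {f : α → ℝ} (hf : Memℓp f 2) :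
    l2norm f = ‖(⟨f, hf⟩ : lp (fun _ : α ↦ ℝ) 2)‖ := by
  rw [lp.norm_eq_tsum_rpow (by norm_num), l2norm, Real.sqrt_eq_rpow]
  simp [Real.norm_eq_abs, sq_abs]

lemma l2norm_add_le {f g : α → ℝ} (hf : Memℓp f 2) (hg : Memℓp g 2) :
    l2norm (f + g) ≤ l2norm f + l2norm g := by
  rw [l2norm_eq_norm hf, l2norm_eq_norm hg, l2norm_eq_norm (hf.add hg)]
  exact norm_add_le (⟨f, hf⟩ : lp (fun _ : α ↦ ℝ) 2) ⟨g, hg⟩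

end L2

lemma tsum_comp_sub_right {G M : Type*} [AddGroup G] [AddCommMonoid M] [TopologicalSpace M]
    (f : G → M) (a : G) : ∑' t, f (t - a) = ∑' t, f t :=
  (Equiv.subRight a).tsum_eq f

lemma l2norm_tau {G : Type*} [AddCommGroup G] (x : G) (f : G → ℝ) :
    l2norm (tau x f) = l2norm f := by
  rw [l2norm, l2norm, ← (Equiv.addRight x).tsum_eq fun y ↦ f y ^ 2]
  rfl

lemma card_sub_le_sq_mul_card {G : Type*} [AddGroup G] [DecidableEq G] {A : Finset G} {K : ℝ}
    (hAA : (#(A + A) : ℝ) ≤ K * #A) : (#(A - A) : ℝ) ≤ K ^ 2 * #A := by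
  obtain rfl | hA := A.eq_empty_or_nonempty
  · simp
  have ruzsa : (#(A - A) * #A : ℝ) ≤ #(A + A) * #(A + A) := by
    exact_mod_cast ruzsa_triangle_inequality_sub_add_add A A A
  have hA' : (0 : ℝ) < #A := by positivity
  nlinarith [(#(A + A)).cast_nonneg (α := ℝ)]

section Sampling

variable {G ι : Type*} [AddCommGroup G] [Fintype ι]

/-- `f * μ_y`, where `μ_y = (1 / m) ∑ᵢ δ_{y i}` is the empirical measure of the sample `y`. -/
noncomputable def sampleConv (f : G → ℝ) (y : ι → G) : G → ℝ :=
  fun t ↦ (Fintype.card ι : ℝ)⁻¹ * ∑ i, f (t - y i)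

lemma tau_sampleConv_add_const (f : G → ℝ) (z : ι → G) (x : G) :
    tau x (sampleConv f fun i ↦ z i + x) = sampleConv f z := by
  ext t
  simp [tau, sampleConv, add_sub_add_right_eq_sub]

lemma memℓp_sum_comp_sub {α : Type*} (s : Finset α) {f : G → ℝ} (hf : Memℓp f 2) (y : α → G) :
    Memℓp (fun t ↦ ∑ i ∈ s, f (t - y i)) 2 := by
  convert Memℓp.finsetSum s fun i _ ↦ hf.comp_equiv (Equiv.subRight (y i)) using 1
  ext t
  simp

lemma Memℓp.sampleConv {f : G → ℝ} (hf : Memℓp f 2) (y : ι → G) : Memℓp (sampleConv f y) 2 :=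
  (memℓp_sum_comp_sub univ hf y).const_mul _

variable [DecidableEq G]

lemma conv_muF_apply (f : G → ℝ) (A : Finset G) (t : G) :
    conv f (muF A) t = (#A : ℝ)⁻¹ * ∑ a ∈ A, f (t - a) := by
  rw [conv, ← (Equiv.subLeft t).tsum_eq, tsum_eq_sum (s := A) fun a ha ↦ by simp [muF, ha],
    mul_sum]
  exact sum_congr rfl fun a ha ↦ by simp [muF, ha, mul_comm]

lemma Memℓp.conv_muF {f : G → ℝ} (hf : Memℓp f 2) (A : Finset G) :
    Memℓp (conv f (muF A)) 2 := by
  rw [funext (conv_muF_apply f A)]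
  exact (memℓp_sum_comp_sub A hf fun a ↦ a).const_mul _

lemma sq_l2norm_tau_conv_muF_sub_le {f : G → ℝ} (hf : Memℓp f 2) (A : Finset G) {z : ι → G}
    {x : G} {c : ℝ} (hz : l2norm (sampleConv f z - conv f (muF A)) ^ 2 ≤ c)
    (hzx : l2norm (sampleConv f (fun i ↦ z i + x) - conv f (muF A)) ^ 2 ≤ c) :
    l2norm (tau x (conv f (muF A)) - conv f (muF A)) ^ 2 ≤ 4 * c := by
  set g := conv f (muF A)
  have hmem (y : ι → G) : Memℓp (sampleConv f y - g) 2 := (hf.sampleConv y).sub (hf.conv_muF A)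
  have hmem_tau : Memℓp (tau x (sampleConv f (fun i ↦ z i + x) - g)) 2 :=
    (hmem _).comp_equiv (Equiv.addRight x)
  have hdecomp : tau x g - g
      = -tau x (sampleConv f (fun i ↦ z i + x) - g) + (sampleConv f z - g) := by
    rw [← tau_sampleConv_add_const f z x]
    ext t
    simp only [tau, Pi.add_apply, Pi.neg_apply, Pi.sub_apply]
    ring
  have htriangle : l2norm (tau x g - g)
      ≤ l2norm (sampleConv f (fun i ↦ z i + x) - g) + l2norm (sampleConv f z - g) := by
    rw [hdecomp]
    refine (l2norm_add_le hmem_tau.neg (hmem z)).trans_eq ?_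
    rw [l2norm_neg, l2norm_tau]
  nlinarith [pow_le_pow_left₀ (l2norm_nonneg _) htriangle 2,
    sq_nonneg (l2norm (sampleConv f (fun i ↦ z i + x) - g) - l2norm (sampleConv f z - g))]

variable [DecidableEq ι] [Nonempty ι]

lemma sum_sq_sampleConv_sub_conv_muF_le {A : Finset G} (hA : A.Nonempty) (f : G → ℝ) (t : G) :
    ∑ y ∈ Fintype.piFinset (fun _ : ι ↦ A), (sampleConv f y t - conv f (muF A) t) ^ 2
      ≤ #A ^ (Fintype.card ι - 1) / Fintype.card ι * ∑ a ∈ A, f (t - a) ^ 2 := by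
  set g := conv f (muF A) t with hg
  have hmean : ∑ a ∈ A, (f (t - a) - g) = 0 := by
    rw [sum_sub_distrib, sum_const, nsmul_eq_mul, hg, conv_muF_apply,
      mul_inv_cancel_left₀ (by positivity), sub_self]
  have hsample (y : ι → G) :
      sampleConv f y t - g = (Fintype.card ι : ℝ)⁻¹ * ∑ i, (f (t - y i) - g) := by
    rw [sampleConv, sum_sub_distrib, sum_const, card_univ, nsmul_eq_mul, mul_sub,
      inv_mul_cancel_left₀ (by positivity)]
  calc ∑ y ∈ Fintype.piFinset (fun _ : ι ↦ A), (sampleConv f y t - g) ^ 2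
      = (Fintype.card ι : ℝ)⁻¹ ^ 2
          * ∑ y ∈ Fintype.piFinset (fun _ : ι ↦ A), (∑ i, (f (t - y i) - g)) ^ 2 := by
        simp_rw [hsample, mul_pow, mul_sum]
    _ = #A ^ (Fintype.card ι - 1) / Fintype.card ι * ∑ a ∈ A, (f (t - a) - g) ^ 2 := by
        rw [sum_piFinset_sq_sum_apply A (h := fun a ↦ f (t - a) - g) hmean]
        field_simp
    _ ≤ #A ^ (Fintype.card ι - 1) / Fintype.card ι * ∑ a ∈ A, f (t - a) ^ 2 :=
        mul_le_mul_of_nonneg_left (sum_sub_sq_le_sum_sq hmean) (by positivity)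

lemma sum_sq_l2norm_sampleConv_sub_conv_muF_le {A : Finset G} (hA : A.Nonempty) {f : G → ℝ}
    (hf : Memℓp f 2) :
    ∑ y ∈ Fintype.piFinset (fun _ : ι ↦ A), l2norm (sampleConv f y - conv f (muF A)) ^ 2
      ≤ #A ^ Fintype.card ι / Fintype.card ι * l2norm f ^ 2 := by
  have hsummable {φ : G → ℝ} (hφ : Memℓp φ 2) := memℓp_two_iff_summable_sq.1 hφ
  have hsummable_sample (y : ι → G) :=
    hsummable ((hf.sampleConv y).sub (hf.conv_muF A))
  have hsummable_translate (a : G) : Summable fun t ↦ f (t - a) ^ 2 :=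
    hsummable (hf.comp_equiv (Equiv.subRight a))
  calc ∑ y ∈ Fintype.piFinset (fun _ : ι ↦ A), l2norm (sampleConv f y - conv f (muF A)) ^ 2
      = ∑' t, ∑ y ∈ Fintype.piFinset (fun _ : ι ↦ A),
          (sampleConv f y t - conv f (muF A) t) ^ 2 := by
        simp_rw [sq_l2norm]
        exact (Summable.tsum_finsetSum fun y _ ↦ hsummable_sample y).symm
    _ ≤ ∑' t, #A ^ (Fintype.card ι - 1) / Fintype.card ι * ∑ a ∈ A, f (t - a) ^ 2 :=
        Summable.tsum_le_tsum (sum_sq_sampleConv_sub_conv_muF_le hA f)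
          (summable_sum fun y _ ↦ hsummable_sample y)
          ((summable_sum fun a _ ↦ hsummable_translate a).mul_left _)
    _ = #A ^ (Fintype.card ι - 1) / Fintype.card ι * ∑ a ∈ A, ∑' t, f (t - a) ^ 2 := by
        rw [tsum_mul_left, Summable.tsum_finsetSum fun a _ ↦ hsummable_translate a]
    _ = #A ^ Fintype.card ι / Fintype.card ι * l2norm f ^ 2 := by
        simp_rw [tsum_comp_sub_right fun t ↦ f t ^ 2, sum_const, ← sq_l2norm, nsmul_eq_mul]
        obtain ⟨n, hn⟩ := Nat.exists_eq_add_one_of_ne_zero (Fintype.card_ne_zero (α := ι))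
        rw [hn, Nat.add_sub_cancel, pow_succ]
        ring

end Sampling

section Translates

variable {G : Type*} [AddCommGroup G]

lemma eq_add_const_of_sub_zero_eq {n : ℕ} {y z : Fin (n + 1) → G}
    (h : ∀ i : Fin n, y i.succ - y 0 = z i.succ - z 0) : y = fun i ↦ z i + (y 0 - z 0) := by
  ext i
  cases i using Fin.cases with
  | zero => abel
  | succ j =>
    calc y j.succ = (y j.succ - y 0) + y 0 := by abel
      _ = z j.succ + (y 0 - z 0) := by rw [h j]; abel

lemma exists_card_le_mul_card_translates [DecidableEq G] {n : ℕ} {A : Finset G}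
    {L : Finset (Fin (n + 1) → G)} (hLA : L ⊆ Fintype.piFinset fun _ ↦ A) (hL : L.Nonempty) :
    ∃ z ∈ L, ∃ X : Finset G, #L ≤ #(A - A) ^ n * #X ∧ ∀ x ∈ X, (fun i ↦ z i + x) ∈ L := by
  let k : (Fin (n + 1) → G) → Fin n → G := fun y i ↦ y i.succ - y 0
  have hk : ∀ y ∈ L, k y ∈ Fintype.piFinset fun _ ↦ A - A := fun y hy ↦
    have hyA := Fintype.mem_piFinset.1 (hLA hy)
    Fintype.mem_piFinset.2 fun i ↦ sub_mem_sub (hyA _) (hyA _)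
  obtain ⟨y₀, hy₀⟩ := hL
  have hAA : (0 : ℚ) < #(A - A) ^ n := by
    have := Fintype.mem_piFinset.1 (hLA hy₀) 0
    have : (A - A).Nonempty := ⟨_, sub_mem_sub this this⟩
    positivity
  obtain ⟨d, -, hd⟩ := exists_le_card_fiber_of_nsmul_le_card_of_maps_to hk ⟨_, hk y₀ hy₀⟩
    (b := (#L : ℚ) / #(A - A) ^ n) (by
      rw [Fintype.card_piFinset_const, nsmul_eq_mul, Nat.cast_pow, mul_div_cancel₀ _ hAA.ne'])
  set fiber := {y ∈ L | k y = d}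
  have hfiber : #L ≤ #(A - A) ^ n * #fiber := by
    rw [div_le_iff₀' hAA] at hd
    exact_mod_cast hd
  obtain ⟨z, hz⟩ : fiber.Nonempty :=
    card_pos.1 (Nat.pos_of_mul_pos_left ((card_pos.2 ⟨y₀, hy₀⟩).trans_le hfiber))
  have htranslate : ∀ y ∈ fiber, y = fun i ↦ z i + (y 0 - z 0) := fun y hy ↦
    eq_add_const_of_sub_zero_eq fun i ↦
      congr_fun ((mem_filter.1 hy).2.trans (mem_filter.1 hz).2.symm) i
  refine ⟨z, (mem_filter.1 hz).1, fiber.image fun y ↦ y 0 - z 0, ?_, ?_⟩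
  · rwa [card_image_of_injOn fun y hy y' hy' hyy' ↦ by
      rw [htranslate y hy, htranslate y' hy', hyy']]
  · simp only [mem_image]
    rintro _ ⟨y, hy, rfl⟩
    rw [← htranslate y hy]
    exact (mem_filter.1 hy).1

end Translates

theorem exists_almost_periods {G : Type*} [AddCommGroup G] [DecidableEq G] {A : Finset G}
    (hA : A.Nonempty) {K : ℝ} (hAA : (#(A + A) : ℝ) ≤ K * #A) {f : G → ℝ} (hf : Memℓp f 2)
    (n : ℕ) :
    ∃ X : Finset G, (#A : ℝ) ≤ 2 * K ^ (2 * n) * #X ∧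
      ∀ x ∈ X, l2norm (tau x (conv f (muF A)) - conv f (muF A)) ^ 2
        ≤ 8 / (n + 1) * l2norm f ^ 2 := by
  set M := l2norm f ^ 2 / (n + 1)
  set L := {y ∈ Fintype.piFinset fun _ : Fin (n + 1) ↦ A |
    l2norm (sampleConv f y - conv f (muF A)) ^ 2 ≤ 2 * M}
  have hL : #A ^ (n + 1) ≤ 2 * #L := by
    have := card_le_two_mul_card_filter_le (M := M) (fun y _ ↦ sq_nonneg _) <| by
      convert sum_sq_l2norm_sampleConv_sub_conv_muF_le (ι := Fin (n + 1)) hA hf using 1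
      simp [M]
      ring
    simpa [Fintype.card_piFinset_const] using this
  have hLne : L.Nonempty := card_pos.1 (by have := pow_pos hA.card_pos (n + 1); omega)
  obtain ⟨z, hz, X, hXL, hX⟩ := exists_card_le_mul_card_translates (filter_subset _ _) hLne
  refine ⟨X, ?_, fun x hx ↦ ?_⟩
  · have hcount : (#A : ℝ) ^ (n + 1) ≤ 2 * #(A - A) ^ n * #X := by
      rw [mul_assoc]
      exact_mod_cast hL.trans (Nat.mul_le_mul_left 2 hXL)
    refine le_of_mul_le_mul_left ?_ (pow_pos (Nat.cast_pos.2 hA.card_pos) n)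
    calc (#A : ℝ) ^ n * #A = #A ^ (n + 1) := (pow_succ _ _).symm
      _ ≤ 2 * #(A - A) ^ n * #X := hcount
      _ ≤ 2 * (K ^ 2 * #A) ^ n * #X := by gcongr; exact card_sub_le_sq_mul_card hAA
      _ = #A ^ n * (2 * K ^ (2 * n) * #X) := by ring
  · calc _ ≤ 4 * (2 * M) := sq_l2norm_tau_conv_muF_sub_le hf A (mem_filter.1 hz).2
          (mem_filter.1 (hX x hx)).2
      _ = 8 / (n + 1) * l2norm f ^ 2 := by ring

lemma two_mul_rpow_neg_le {K e : ℝ} (hK : 1 ≤ K) {n : ℕ} (hn : (2 * n + 1 : ℝ) ≤ e) :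
    (2 * K) ^ (-e) ≤ (2 * K ^ (2 * n))⁻¹ := by
  have hpow : 2 * K ^ (2 * n) ≤ (2 * K) ^ (2 * n + 1) := by
    rw [mul_pow, pow_succ K]
    gcongr
    · exact le_self_pow₀ one_le_two (by omega)
    · exact le_mul_of_one_le_right (by positivity) hK
  rw [Real.rpow_neg (by positivity)]
  gcongr
  calc 2 * K ^ (2 * n) ≤ (2 * K) ^ (2 * n + 1) := hpow
    _ = (2 * K) ^ (2 * n + 1 : ℝ) := by norm_cast
    _ ≤ (2 * K) ^ e := Real.rpow_le_rpow_of_exponent_le (by linarith) hn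

theorem croot_sisask_l2 :
    ∃ C : ℝ, 0 < C ∧
      ∀ (G : Type) (_ : AddCommGroup G) (_ : DecidableEq G)
        (A : Finset G), A.Nonempty → ∀ K : ℝ, 1 ≤ K →
        ((A + A).card : ℝ) ≤ K * A.card →
        ∀ f : G → ℝ, (Function.support f).Finite →
        ∀ ε : ℝ, 0 < ε → ε ≤ 1 →
        ∃ X : Finset G,
          (2 * K) ^ (-(C * (ε⁻¹ ^ 2))) * A.card ≤ (X.card : ℝ) ∧
          ∀ x ∈ X, l2norm (tau x (conv f (muF A)) - conv f (muF A)) ≤ ε * l2norm f := by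
  refine ⟨19, by norm_num, fun G _ _ A hA K hK hAA f hf ε hε hε1 ↦ ?_⟩
  set n := ⌈8 * ε⁻¹ ^ 2⌉₊
  have hε_inv : 1 ≤ ε⁻¹ ^ 2 := one_le_pow₀ ((one_le_inv₀ hε).2 hε1)
  have hn_ceil := Nat.ceil_lt_add_one (show 0 ≤ 8 * ε⁻¹ ^ 2 by positivity)
  have hn_lower : 8 / (n + 1 : ℝ) ≤ ε ^ 2 := by
    rw [div_le_iff₀ (by positivity)]
    calc (8 : ℝ) = ε ^ 2 * (8 * ε⁻¹ ^ 2) := by field_simp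
      _ ≤ ε ^ 2 * (n + 1) := by gcongr; linarith [Nat.le_ceil (8 * ε⁻¹ ^ 2)]
  obtain ⟨X, hXcard, hX⟩ :=
    exists_almost_periods hA hAA ((memℓp_zero hf).of_exponent_ge zero_le) n
  refine ⟨X, ?_, fun x hx ↦ ?_⟩
  · -- `2 ⌈8 ε⁻²⌉ + 1 ≤ 16 ε⁻² + 3 ≤ 19 ε⁻²`
    calc (2 * K) ^ (-(19 * ε⁻¹ ^ 2)) * #A ≤ (2 * K ^ (2 * n))⁻¹ * #A := by
          gcongr
          exact two_mul_rpow_neg_le hK (by linarith)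
      _ ≤ #X := by rwa [inv_mul_le_iff₀ (mul_pos two_pos (pow_pos (by linarith) _))]
  · refine (pow_le_pow_iff_left₀ (l2norm_nonneg _) (mul_nonneg hε.le (l2norm_nonneg f))
      two_ne_zero).1 ?_
    calc _ ≤ 8 / (n + 1) * l2norm f ^ 2 := hX x hx
      _ ≤ ε ^ 2 * l2norm f ^ 2 := by gcongr
      _ = (ε * l2norm f) ^ 2 := by ring
end

section
/- Let A be a finite nonempty subset of an abelian group G and suppose X ⊆ G is such that ‖τ_x(1_A * 1_A) - 1_A * 1_A‖_{ℓ^2}^2 ≤ ‖1_A * 1_A‖_{ℓ^2}^2 / 4 holds for every x in the k-fold sumset kX. Then kX ⊆ 2A - 2A. -/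
open Pointwise

/-- Indicator function of a finite set. -/
def ind {G : Type*} [DecidableEq G] (A : Finset G) : G → ℝ :=
  fun x => if x ∈ A then 1 else 0

/-- Square of the `ℓ²(G)` norm. -/
noncomputable def l2sq {G : Type*} (f : G → ℝ) : ℝ :=
  ∑' y, (f y) ^ 2

/-!
`1_A * 1_A` is supported on `A + A`. If `x ∉ (A + A) - (A + A)`, the translate `τ_x f` of a function
`f` supported on `A + A` has support disjoint from that of `f`, so `‖τ_x f - f‖² = 2‖f‖²`. For
`f = 1_A * 1_A` this exceeds `‖f‖² / 4`, because `f(a + a) ≥ 1` makes `‖f‖²` positive.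
-/

section Convolution

variable {G : Type*} [AddCommGroup G] [DecidableEq G]

lemma conv_ind_apply (A : Finset G) (g : G → ℝ) (x : G) :
    conv (ind A) g x = ∑ y ∈ A, g (x - y) := by
  unfold conv
  rw [tsum_eq_sum (s := A) fun y hy => by simp [ind, hy]]
  exact Finset.sum_congr rfl fun y hy => by simp [ind, hy]

lemma support_conv_ind_subset (A B : Finset G) :
    Function.support (conv (ind A) (ind B)) ⊆ ↑(A + B) := by
  intro x hx
  rw [Function.mem_support, conv_ind_apply] at hx
  obtain ⟨y, hy, hne⟩ := Finset.exists_ne_zero_of_sum_ne_zero hx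
  have hxy : x - y ∈ B := by
    by_contra hc
    simp [ind, hc] at hne
  exact Finset.mem_add.2 ⟨y, hy, x - y, hxy, add_sub_cancel y x⟩

lemma one_le_conv_ind_add {A B : Finset G} {a b : G} (ha : a ∈ A) (hb : b ∈ B) :
    1 ≤ conv (ind A) (ind B) (a + b) := by
  rw [conv_ind_apply]
  calc (1 : ℝ) = ind B (a + b - a) := by simp [ind, hb]
    _ ≤ ∑ y ∈ A, ind B (a + b - y) :=
      Finset.single_le_sum (f := fun y => ind B (a + b - y))
        (fun y _ => by unfold ind; split_ifs <;> norm_num) ha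

end Convolution

section L2

lemma summable_sq_of_support_subset {G : Type*} {f : G → ℝ} {S : Finset G}
    (hf : Function.support f ⊆ S) : Summable fun y => f y ^ 2 :=
  summable_of_hasFiniteSupport <| S.finite_toSet.subset fun y hy => hf (by simpa using hy)

lemma l2sq_pos_of_ne_zero {G : Type*} {f : G → ℝ} (hf : Summable fun y => f y ^ 2) {a : G}
    (ha : f a ≠ 0) : 0 < l2sq f :=
  (even_two.pow_pos ha).trans_le <| hf.le_tsum a fun _ _ => sq_nonneg _

variable {G : Type*} [AddCommGroup G]

lemma l2sq_tau_sub_self_of_disjoint {f : G → ℝ} (hf : Summable fun y => f y ^ 2) {x : G}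
    (hdisj : ∀ y, f (y + x) * f y = 0) : l2sq (tau x f - f) = 2 * l2sq f := by
  have hf' : Summable fun y => f (y + x) ^ 2 :=
    ((Equiv.addRight x).summable_iff (f := fun y => f y ^ 2)).2 hf
  unfold l2sq tau
  calc ∑' y, ((fun y => f (y + x)) - f) y ^ 2
      = ∑' y, (f (y + x) ^ 2 + f y ^ 2) :=
        tsum_congr fun y => by simp only [Pi.sub_apply]; linear_combination -2 * hdisj y
    _ = ∑' y, f (y + x) ^ 2 + ∑' y, f y ^ 2 := hf'.tsum_add hf
    _ = ∑' y, f y ^ 2 + ∑' y, f y ^ 2 :=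
        congrArg (· + _) ((Equiv.addRight x).tsum_eq fun y => f y ^ 2)
    _ = 2 * ∑' y, f y ^ 2 := (two_mul _).symm

lemma mem_sub_of_l2sq_tau_sub_lt [DecidableEq G] {f : G → ℝ} {S : Finset G}
    (hf : Function.support f ⊆ S) {x : G} (hx : l2sq (tau x f - f) < 2 * l2sq f) :
    x ∈ S - S := by
  by_contra hxS
  refine hx.ne (l2sq_tau_sub_self_of_disjoint (summable_sq_of_support_subset hf) fun y => ?_)
  by_contra hne
  exact hxS (Finset.mem_sub.2 ⟨y + x, hf (left_ne_zero_of_mul hne), y,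
    hf (right_ne_zero_of_mul hne), add_sub_cancel_left y x⟩)

end L2

theorem kX_subset_2A_sub_2A {G : Type*} [AddCommGroup G] [DecidableEq G]
    (A X : Finset G) (hA : A.Nonempty) (k : ℕ)
    (h : ∀ x ∈ (k • X : Finset G),
      l2sq (tau x (conv (ind A) (ind A)) - conv (ind A) (ind A)) ≤
        l2sq (conv (ind A) (ind A)) / 4) :
    (k • X : Finset G) ⊆ A + A - (A + A) := by
  intro x hx
  have hsupp := support_conv_ind_subset A A
  obtain ⟨a, ha⟩ := hA
  have hpos : 0 < l2sq (conv (ind A) (ind A)) :=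
    l2sq_pos_of_ne_zero (summable_sq_of_support_subset hsupp)
      (one_pos.trans_le (one_le_conv_ind_add ha ha)).ne'
  exact mem_sub_of_l2sq_tau_sub_lt hsupp ((h x hx).trans_lt (by linarith))
end

section
/- Let X be a finite subset of an abelian group G, let l be a positive integer with |lX| ≤ K|(l-1)X|, and let ε ∈ (0,1]. Then X - X ⊆ Bohr(LSpec(lX, ε), 2ε√(2K)). -/
/-!
Write `A = l • X = (l - 1) • X + X`. For `a, b ∈ X`, `z ∈ (l - 1) • X` and `u ∈ A`, since `|γ| = 1`,
`|γ (a - b) - 1| = |γ (z + a) - γ (z + b)| ≤ |γ (z + a) - γ u| + |γ (z + b) - γ u|`,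
with `z + a, z + b ∈ A`. Squaring and summing over `z` and `u` bounds
`|(l - 1) • X| |A| |γ (a - b) - 1|²` by
`4 ∑_{u, v ∈ A} |γ u - γ v|² = 4 |A|² ‖1 - γ‖²_{L²(μ_A * μ_{-A})} ≤ 4 ε² |A|²`,
and `|A| ≤ K |(l - 1) • X|` leaves `|γ (a - b) - 1| ≤ 2 ε √K`.
-/

open Pointwise

open Finset

section IndicatorMeasure

variable {G : Type*} [DecidableEq G]

theorem summable_muF_mul (A : Finset G) (f : G → ℝ) : Summable fun x ↦ muF A x * f x :=
  summable_of_ne_finset_zero (s := A) fun x hx ↦ by simp [muF, hx]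

theorem tsum_muF_mul (A : Finset G) (f : G → ℝ) :
    ∑' x, muF A x * f x = (#A : ℝ)⁻¹ * ∑ a ∈ A, f a := by
  rw [tsum_eq_sum (s := A) fun x hx ↦ by simp [muF, hx], mul_sum]
  exact sum_congr rfl fun x hx ↦ by simp [muF, hx]

variable [AddCommGroup G]

theorem tsum_conv_muF_mul (A B : Finset G) (f : G → ℝ) :
    ∑' z, conv (muF A) (muF B) z * f z =
      (#A * #B : ℝ)⁻¹ * ∑ a ∈ A, ∑ b ∈ B, f (a + b) := by
  have translate (a : G) : ∑' z, muF B (z - a) * f z = ∑' w, muF B w * f (a + w) := by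
    rw [← (Equiv.addLeft a).tsum_eq]
    simp
  have summable (a : G) : Summable fun z ↦ muF B (z - a) * f z := by
    rw [← (Equiv.addLeft a).summable_iff]
    simpa [Function.comp_def] using summable_muF_mul B (fun w ↦ f (a + w))
  calc ∑' z, conv (muF A) (muF B) z * f z
      = ∑' z, (#A : ℝ)⁻¹ * ∑ a ∈ A, muF B (z - a) * f z := by
        simp only [conv, tsum_muF_mul, sum_mul, mul_assoc]
    _ = (#A : ℝ)⁻¹ * ∑ a ∈ A, ∑' w, muF B w * f (a + w) := by
        rw [tsum_mul_left, Summable.tsum_finsetSum fun a _ ↦ summable a]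
        simp only [translate]
    _ = (#A * #B : ℝ)⁻¹ * ∑ a ∈ A, ∑ b ∈ B, f (a + b) := by
        simp only [tsum_muF_mul, ← mul_sum, mul_inv, mul_assoc]

theorem tsum_conv_muF_neg_mul (A : Finset G) (f : G → ℝ) :
    ∑' z, conv (muF A) (muF (-A)) z * f z = (#A ^ 2 : ℝ)⁻¹ * ∑ u ∈ A, ∑ v ∈ A, f (u - v) := by
  simp [tsum_conv_muF_mul, sq, sub_eq_add_neg]

end IndicatorMeasure

namespace AddChar

variable {G R : Type*} [AddGroup G] [NormedDivisionRing R] {γ : AddChar G R}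

theorem norm_map_add_sub_map_add (hγ : ∀ t, ‖γ t‖ = 1) (u s t : G) :
    ‖γ (u + s) - γ (u + t)‖ = ‖γ s - γ t‖ := by
  rw [map_add_eq_mul, map_add_eq_mul, ← mul_sub, norm_mul, hγ, one_mul]

theorem norm_map_sub_sub_one (hγ : ∀ t, ‖γ t‖ = 1) (u v : G) :
    ‖γ (u - v) - 1‖ = ‖γ u - γ v‖ := by
  conv_rhs => rw [← sub_add_cancel u v, map_add_eq_mul, ← sub_one_mul, norm_mul, hγ, mul_one]

end AddChar

theorem norm_sub_sq_le_two_mul {E : Type*} [SeminormedAddCommGroup E] (x y w : E) :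
    ‖x - y‖ ^ 2 ≤ 2 * (‖x - w‖ ^ 2 + ‖y - w‖ ^ 2) :=
  calc ‖x - y‖ ^ 2 ≤ (‖x - w‖ + ‖y - w‖) ^ 2 := by
        gcongr; simpa only [norm_sub_rev y] using norm_sub_le_norm_sub_add_norm_sub x w y
    _ ≤ 2 * (‖x - w‖ ^ 2 + ‖y - w‖ ^ 2) := add_sq_le

section translates

variable {G : Type*} [AddCommGroup G]

theorem sum_comp_add_le_sum {T A : Finset G} {c : G} (hTA : ∀ z ∈ T, z + c ∈ A)
    {f : G → ℝ} (hf : ∀ x, 0 ≤ f x) : ∑ z ∈ T, f (z + c) ≤ ∑ x ∈ A, f x := by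
  refine (sum_map T (addRightEmbedding c) f).symm.trans_le ?_
  refine sum_le_sum_of_subset_of_nonneg ?_ fun x _ _ ↦ hf x
  intro x hx
  obtain ⟨z, hz, rfl⟩ := mem_map.mp hx
  exact hTA z hz

theorem card_mul_card_mul_sq_le_four_mul_sum_norm_sub_sq {E : Type*} [SeminormedAddCommGroup E]
    (g : G → E) {T A : Finset G} {a b : G} (ha : ∀ z ∈ T, z + a ∈ A) (hb : ∀ z ∈ T, z + b ∈ A)
    {d : ℝ} (hd : ∀ z ∈ T, ‖g (z + a) - g (z + b)‖ = d) :
    #T * #A * d ^ 2 ≤ 4 * ∑ u ∈ A, ∑ v ∈ A, ‖g u - g v‖ ^ 2 :=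
  calc (#T * #A * d ^ 2 : ℝ)
      = ∑ u ∈ A, ∑ z ∈ T, ‖g (z + a) - g (z + b)‖ ^ 2 := by
        rw [sum_comm, sum_congr rfl fun z hz ↦ by rw [hd z hz]]
        simp [mul_assoc]
    _ ≤ ∑ u ∈ A, (2 * ∑ z ∈ T, ‖g (z + a) - g u‖ ^ 2 + 2 * ∑ z ∈ T, ‖g (z + b) - g u‖ ^ 2) := by
        gcongr with u
        simp only [mul_sum, ← sum_add_distrib, ← mul_add]
        exact sum_le_sum fun z _ ↦ norm_sub_sq_le_two_mul _ _ _
    _ ≤ ∑ u ∈ A, (2 * ∑ v ∈ A, ‖g v - g u‖ ^ 2 + 2 * ∑ v ∈ A, ‖g v - g u‖ ^ 2) := by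
        gcongr with u
        · exact sum_comp_add_le_sum (f := fun v ↦ ‖g v - g u‖ ^ 2) ha fun _ ↦ by positivity
        · exact sum_comp_add_le_sum (f := fun v ↦ ‖g v - g u‖ ^ 2) hb fun _ ↦ by positivity
    _ = 4 * ∑ u ∈ A, ∑ v ∈ A, ‖g u - g v‖ ^ 2 := by
        rw [sum_comm, mul_sum]
        exact sum_congr rfl fun _ _ ↦ by ring

end translates

theorem diff_subset_bohr_of_lspec_general {G : Type*} [AddCommGroup G] [DecidableEq G]
    (X : Finset G) (l : ℕ) (hl : 1 ≤ l) (K : ℝ)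
    (hK : (((l • X : Finset G)).card : ℝ) ≤ K * (((l - 1) • X : Finset G)).card)
    (ε : ℝ) (hε : 0 < ε) :
    ∀ γ : AddChar G ℂ, (∀ t : G, ‖γ t‖ = 1) →
      (∑' z, conv (muF (l • X)) (muF (-(l • X))) z * ‖1 - γ z‖ ^ 2 ≤ ε ^ 2) →
      ∀ x ∈ (X - X : Finset G), ‖γ x - 1‖ ≤ 2 * ε * Real.sqrt (2 * K) := by
  intro γ hγ hspec x hx
  obtain ⟨a, ha, b, hb, rfl⟩ := mem_sub.mp hx
  obtain ⟨n, rfl⟩ := Nat.exists_eq_add_of_le' hl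
  rw [Nat.add_sub_cancel] at hK
  set A := (n + 1) • X
  set T := n • X
  have hAT : A = T + X := succ_nsmul X n
  have htranslate (c : G) (hc : c ∈ X) (z : G) (hz : z ∈ T) : z + c ∈ A :=
    hAT ▸ add_mem_add hz hc
  have hTpos : 0 < (#T : ℝ) := by exact_mod_cast (Nonempty.nsmul ⟨a, ha⟩).card_pos
  have hApos : 0 < (#A : ℝ) := by exact_mod_cast (Nonempty.nsmul ⟨a, ha⟩).card_pos
  have henergy : ∑ u ∈ A, ∑ v ∈ A, ‖γ u - γ v‖ ^ 2 ≤ ε ^ 2 * #A ^ 2 := by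
    rw [tsum_conv_muF_neg_mul, inv_mul_le_iff₀ (by positivity)] at hspec
    simpa [norm_sub_rev (1 : ℂ), AddChar.norm_map_sub_sub_one hγ, mul_comm] using hspec
  have hkey := card_mul_card_mul_sq_le_four_mul_sum_norm_sub_sq γ (htranslate a ha)
    (htranslate b hb) fun z _ ↦
      (AddChar.norm_map_add_sub_map_add hγ z a b).trans (AddChar.norm_map_sub_sub_one hγ a b).symm
  have hsq : ‖γ (a - b) - 1‖ ^ 2 ≤ 4 * K * ε ^ 2 := by
    refine le_of_mul_le_mul_left ?_ (mul_pos hTpos hApos)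
    calc #T * #A * ‖γ (a - b) - 1‖ ^ 2 ≤ 4 * ε ^ 2 * #A * #A := by linarith
      _ ≤ 4 * ε ^ 2 * #A * (K * #T) := by gcongr
      _ = #T * #A * (4 * K * ε ^ 2) := by ring
  have hK0 : 0 ≤ K := by nlinarith [sq_nonneg ‖γ (a - b) - 1‖]
  calc ‖γ (a - b) - 1‖ ≤ 2 * ε * √K := by
        rw [← pow_le_pow_iff_left₀ (norm_nonneg _) (by positivity) two_ne_zero, mul_pow,
          Real.sq_sqrt hK0]
        linarith
    _ ≤ 2 * ε * √(2 * K) := by gcongr; linarith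

theorem diff_subset_bohr_of_lspec {G : Type*} [AddCommGroup G] [DecidableEq G]
    (X : Finset G) (l : ℕ) (hl : 1 ≤ l) (K : ℝ)
    (hK : (((l • X : Finset G)).card : ℝ) ≤ K * (((l - 1) • X : Finset G)).card)
    (ε : ℝ) (hε : 0 < ε) (hε' : ε ≤ 1) :
    ∀ γ : AddChar G ℂ, (∀ t : G, ‖γ t‖ = 1) →
      (∑' z, conv (muF (l • X)) (muF (-(l • X))) z * ‖1 - γ z‖ ^ 2 ≤ ε ^ 2) →
      ∀ x ∈ (X - X : Finset G), ‖γ x - 1‖ ≤ 2 * ε * Real.sqrt (2 * K) :=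
  diff_subset_bohr_of_lspec_general X l hl K hK ε hε
end
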